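/- arXiv:1210.1438 — 2 statements merged into one kernel-verified Lean document; each statement's English description precedes it below -/
import Mathlib

section
/- Let J be a B(H)-ideal and S ∈ J. The following are equivalent: (a) (S)_J is a B(H)-ideal; (b) ⟨S⟩_J is a B(H)-ideal; (c) (S)_J^ℝ is a B(H)-ideal; (d) (S) = J(S), i.e., (S) is J-soft; (e) there exist m ∈ ℕ and A, B, A_1, …, A_m, B_1, …, B_m ∈ J such that S = AS + SB + Σ_{i=1}^m A_iSB_i. -/
open scoped BigOperators
open TopologicalSpace

variable {H : Type*} [NormedAddCommGroup H] [InnerProductSpace ℂ H] [CompleteSpace H]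

/-- `J` is a two-sided ideal of `B(H)`: an additive subgroup closed under left and
right multiplication by arbitrary bounded operators. -/
def IsBHIdeal (J : Set (H →L[ℂ] H)) : Prop :=
  (0 : H →L[ℂ] H) ∈ J ∧
  (∀ x ∈ J, ∀ y ∈ J, x + y ∈ J) ∧
  (∀ x ∈ J, -x ∈ J) ∧
  ∀ (A : H →L[ℂ] H), ∀ x ∈ J, A * x ∈ J ∧ x * A ∈ J

/-- `I` is a `J`-ideal: an additive subgroup of `B(H)` contained in `J` and closed
under left and right multiplication by elements of `J`. -/
def IsSubideal (J I : Set (H →L[ℂ] H)) : Prop :=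
  I ⊆ J ∧ (0 : H →L[ℂ] H) ∈ I ∧
  (∀ x ∈ I, ∀ y ∈ I, x + y ∈ I) ∧
  (∀ x ∈ I, -x ∈ I) ∧
  ∀ A ∈ J, ∀ x ∈ I, A * x ∈ I ∧ x * A ∈ I

/-- A linear `J`-ideal: a `J`-ideal closed under multiplication by complex scalars. -/
def IsLinearSubideal (J I : Set (H →L[ℂ] H)) : Prop :=
  IsSubideal J I ∧ ∀ (c : ℂ), ∀ x ∈ I, c • x ∈ I

/-- A real linear `J`-ideal: a `J`-ideal closed under multiplication by real scalars. -/
def IsRealSubideal (J I : Set (H →L[ℂ] H)) : Prop :=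
  IsSubideal J I ∧ ∀ (r : ℝ), ∀ x ∈ I, r • x ∈ I

/-- `(𝒮)`: the smallest two-sided ideal of `B(H)` containing `𝒮`. -/
def genBH (𝒮 : Set (H →L[ℂ] H)) : Set (H →L[ℂ] H) :=
  ⋂₀ {I | IsBHIdeal I ∧ 𝒮 ⊆ I}

/-- `⟨𝒮⟩_J`: the smallest `J`-ideal containing `𝒮`. -/
def genSub (J 𝒮 : Set (H →L[ℂ] H)) : Set (H →L[ℂ] H) :=
  ⋂₀ {I | IsSubideal J I ∧ 𝒮 ⊆ I}

/-- `(𝒮)_J`: the smallest linear `J`-ideal containing `𝒮`. -/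
def genLin (J 𝒮 : Set (H →L[ℂ] H)) : Set (H →L[ℂ] H) :=
  ⋂₀ {I | IsLinearSubideal J I ∧ 𝒮 ⊆ I}

/-- `(𝒮)_J^ℝ`: the smallest real linear `J`-ideal containing `𝒮`. -/
def genReal (J 𝒮 : Set (H →L[ℂ] H)) : Set (H →L[ℂ] H) :=
  ⋂₀ {I | IsRealSubideal J I ∧ 𝒮 ⊆ I}

/-- `J(𝒮)`: all finite sums `Σ Aᵢ Xᵢ` with `Aᵢ ∈ J` and `Xᵢ ∈ (𝒮)`. -/
def JGen (J 𝒮 : Set (H →L[ℂ] H)) : Set (H →L[ℂ] H) :=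
  {T | ∃ (n : ℕ) (A X : Fin n → (H →L[ℂ] H)),
    (∀ i, A i ∈ J ∧ X i ∈ genBH 𝒮) ∧ T = ∑ i, A i * X i}

/-- `J(𝒮)J`: all finite sums `Σ Aᵢ Xᵢ Bᵢ` with `Aᵢ, Bᵢ ∈ J` and `Xᵢ ∈ (𝒮)`. -/
def JGenJ (J 𝒮 : Set (H →L[ℂ] H)) : Set (H →L[ℂ] H) :=
  {T | ∃ (n : ℕ) (A X B : Fin n → (H →L[ℂ] H)),
    (∀ i, A i ∈ J ∧ X i ∈ genBH 𝒮 ∧ B i ∈ J) ∧ T = ∑ i, A i * X i * B i}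

/-- `JS + SJ + J(S)J = {AS + SB + Y : A, B ∈ J, Y ∈ J(S)J}`. -/
def JSplus (J : Set (H →L[ℂ] H)) (S : H →L[ℂ] H) : Set (H →L[ℂ] H) :=
  {T | ∃ A ∈ J, ∃ B ∈ J, ∃ Y ∈ JGenJ J {S}, T = A * S + S * B + Y}

/-- `K(H)`: the compact operators on `H`. -/
def KH : Set (H →L[ℂ] H) := {T | IsCompactOperator ⇑T}

/-- `T` is a finite-rank operator: its range is finite-dimensional. -/
def IsFiniteRank (T : H →L[ℂ] H) : Prop :=
  FiniteDimensional ℂ (LinearMap.range (T : H →ₗ[ℂ] H))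

/-!
Everything reduces to `S ∈ J(S)`. Douglas' factorisation gives `C = W |C|` and `|C| = V C`, so
`C⋆ = V C W⋆`; hence every `B(H)`-ideal is self-adjoint and `I * J = J * I` for `B(H)`-ideals.
So if `S ∈ J(S)`, then `(S) = J(S) = (S)J` and `S` lies in the sums `JSJ` of operators `A S B`,
which form a `B(H)`-ideal and the smallest `J`-ideal containing `S`; all three generated
`J`-ideals equal `JSJ`, and (e) can be read off.

Conversely, if a generated `J`-ideal is a `B(H)`-ideal, then `T S ∈ ℂ S + J(S)` for every `T`. If
`S ∉ J(S)`, the coefficient of `S` is a character of `B(H)` vanishing on the rank-one operators of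
`J`. There is none: in finite dimension `1` is a sum of rank-one operators, and in infinite
dimension two isometries `V₁, V₂` with `V₂⋆ V₁ = 0` force `φ(V₂⋆) φ(V₁) = 0` although both
factors are invertible.
-/

open InnerProductSpace

section Operators

variable {𝕜 E F G : Type*} [RCLike 𝕜]

theorem ContinuousLinearMap.exists_eq_comp_of_norm_le
    [NormedAddCommGroup E] [NormedSpace 𝕜 E]
    [NormedAddCommGroup F] [NormedSpace 𝕜 F] [CompleteSpace F]
    [NormedAddCommGroup G] [InnerProductSpace 𝕜 G] [CompleteSpace G]
    (f : E →L[𝕜] F) (g : E →L[𝕜] G) (c : ℝ) (h : ∀ x, ‖f x‖ ≤ c * ‖g x‖) :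
    ∃ W : G →L[𝕜] F, f = W ∘L g := by
  set K := (LinearMap.range (g : E →ₗ[𝕜] G)).topologicalClosure
  let e : E →ₗ[𝕜] K := (g : E →ₗ[𝕜] G).codRestrict K
    fun x => Submodule.le_topologicalClosure _ (LinearMap.mem_range_self _ x)
  have he : DenseRange e := by
    rw [DenseRange, Subtype.dense_iff, ← Set.range_comp]
    exact (Submodule.topologicalClosure_coe _).subset
  refine ⟨(f : E →ₗ[𝕜] F).extendOfNorm e ∘L K.orthogonalProjectionOnto, ?_⟩
  ext x
  have : K.orthogonalProjectionOnto (g x) = e x :=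
    K.orthogonalProjectionOnto_mem_subspace_eq_self (e x)
  simp [this, LinearMap.extendOfNorm_eq he ⟨c, h⟩]

variable [NormedAddCommGroup E]

theorem ContinuousLinearMap.exists_star_eq_mul_mul [InnerProductSpace ℂ E] [CompleteSpace E]
    (C : E →L[ℂ] E) : ∃ V W : E →L[ℂ] E, star C = V * C * W := by
  set T := CFC.abs C
  have hT : IsSelfAdjoint T := .of_nonneg (CFC.abs_nonneg C)
  have hnorm (x : E) : ‖T x‖ = ‖C x‖ := by
    have hTT : adjoint T ∘L T = adjoint C ∘L C := by
      rw [← star_eq_adjoint, hT.star_eq]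
      exact CFC.abs_mul_abs C
    have := apply_norm_sq_eq_inner_adjoint_left T x
    rw [hTT, ← apply_norm_sq_eq_inner_adjoint_left] at this
    exact (sq_eq_sq₀ (norm_nonneg _) (norm_nonneg _)).1 this
  obtain ⟨W, hW⟩ := exists_eq_comp_of_norm_le C T 1 fun x => by rw [hnorm, one_mul]
  obtain ⟨V, hV⟩ := exists_eq_comp_of_norm_le T C 1 fun x => by rw [hnorm, one_mul]
  refine ⟨V, star W, ?_⟩
  calc star C = star T * star W := by rw [hW, ← mul_def, star_mul]
    _ = V * C * star W := by rw [hT.star_eq, hV]; rfl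

variable [InnerProductSpace 𝕜 E] [CompleteSpace E]

theorem Orthonormal.inner_linearIsometry_eq_zero {ι : Type*} {v : ι → E}
    (hv : Orthonormal 𝕜 v) {x : E} (hx : ∀ i, inner 𝕜 x (v i) = 0)
    (f : lp (fun _ : ι => 𝕜) 2) : inner 𝕜 x (hv.orthogonalFamily.linearIsometry f) = 0 := by
  rw [OrthogonalFamily.linearIsometry_apply, ← innerSL_apply_apply,
    ContinuousLinearMap.map_tsum _ (hv.orthogonalFamily.summable_of_lp f)]
  simp [hx]

/-- Split a Hilbert basis indexed by an infinite `w ≃ w ⊕ w` into two halves. -/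
theorem exists_isometries_star_mul_eq_zero (hE : ¬ FiniteDimensional 𝕜 E) :
    ∃ V₁ V₂ : E →L[𝕜] E, star V₁ * V₁ = 1 ∧ star V₂ * V₂ = 1 ∧ star V₂ * V₁ = 0 := by
  obtain ⟨w, b, -⟩ := exists_hilbertBasis 𝕜 E
  have : Infinite w := by
    by_contra hfin
    have := not_infinite_iff_finite.mp hfin
    have := Fintype.ofFinite w
    exact hE (Module.Finite.of_basis b.toOrthonormalBasis.toBasis)
  obtain ⟨e⟩ : Nonempty (w ⊕ w ≃ w) := by
    rw [← Cardinal.eq, Cardinal.mk_sum, Cardinal.lift_id]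
    exact Cardinal.add_eq_self (Cardinal.infinite_iff.mp this)
  have hv : Orthonormal 𝕜 fun s => b (e s) := b.orthonormal.comp _ e.injective
  have hv₁ := hv.comp _ Sum.inl_injective
  have hv₂ := hv.comp _ Sum.inr_injective
  let V₁ := (hv₁.orthogonalFamily.linearIsometry.comp b.repr.toLinearIsometry).toContinuousLinearMap
  let V₂ := (hv₂.orthogonalFamily.linearIsometry.comp b.repr.toLinearIsometry).toContinuousLinearMap
  refine ⟨V₁, V₂, LinearIsometry.adjoint_comp_self _, LinearIsometry.adjoint_comp_self _, ?_⟩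
  ext1 x
  refine ext_inner_left 𝕜 fun y => ?_
  rw [ContinuousLinearMap.star_eq_adjoint, mul_apply_eq_comp,
    ContinuousLinearMap.adjoint_inner_right, zero_apply, inner_zero_right]
  refine hv₁.inner_linearIsometry_eq_zero (fun i => ?_) _
  rw [← inner_conj_symm, map_eq_zero]
  refine hv₂.inner_linearIsometry_eq_zero (fun j => ?_) _
  exact hv.2 Sum.inl_ne_inr

theorem RingHom.exists_rankOne_ne_zero (φ : (E →L[𝕜] E) →+* 𝕜) :
    ∃ u v : E, φ (rankOne 𝕜 u v) ≠ 0 := by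
  by_contra! h
  by_cases hE : FiniteDimensional 𝕜 E
  · have := congrArg φ (OrthonormalBasis.sum_rankOne_eq_id (stdOrthonormalBasis 𝕜 E))
    simp [h, ← ContinuousLinearMap.one_def] at this
  · obtain ⟨V₁, V₂, h₁, h₂, h₂₁⟩ := exists_isometries_star_mul_eq_zero hE
    replace h₁ := congrArg φ h₁
    replace h₂ := congrArg φ h₂
    replace h₂₁ := congrArg φ h₂₁
    simp only [map_mul, map_one, map_zero] at h₁ h₂ h₂₁
    rcases mul_eq_zero.1 h₂₁ with h | h <;> simp [h] at h₁ h₂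

end Operators

section Ideals

open ContinuousLinearMap Pointwise

variable {E : Type*} [NormedAddCommGroup E] [InnerProductSpace ℂ E]

namespace IsBHIdeal

variable {I J : Set (E →L[ℂ] E)} {x : E →L[ℂ] E}

theorem mul_mem_left (hI : IsBHIdeal I) (A : E →L[ℂ] E) (hx : x ∈ I) : A * x ∈ I :=
  (hI.2.2.2 A x hx).1

theorem mul_mem_right (hI : IsBHIdeal I) (A : E →L[ℂ] E) (hx : x ∈ I) : x * A ∈ I :=
  (hI.2.2.2 A x hx).2

theorem sub_mem (hI : IsBHIdeal I) {y : E →L[ℂ] E} (hx : x ∈ I) (hy : y ∈ I) : x - y ∈ I := by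
  rw [sub_eq_add_neg]
  exact hI.2.1 _ hx _ (hI.2.2.1 _ hy)

theorem smul_mem (hI : IsBHIdeal I) (c : ℂ) (hx : x ∈ I) : c • x ∈ I := by
  simpa using hI.mul_mem_left (c • 1) hx

theorem smul_mem_iff (hI : IsBHIdeal I) {c : ℂ} (hc : c ≠ 0) : c • x ∈ I ↔ x ∈ I :=
  ⟨fun h => by simpa [smul_smul, hc] using hI.smul_mem c⁻¹ h, hI.smul_mem c⟩

theorem isSubideal (hI : IsBHIdeal I) (hIJ : I ⊆ J) : IsSubideal J I :=
  ⟨hIJ, hI.1, hI.2.1, hI.2.2.1, fun A _ => hI.2.2.2 A⟩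

theorem isLinearSubideal (hI : IsBHIdeal I) (hIJ : I ⊆ J) : IsLinearSubideal J I :=
  ⟨hI.isSubideal hIJ, fun c _ => hI.smul_mem c⟩

theorem sInter {𝓘 : Set (Set (E →L[ℂ] E))} (h𝓘 : ∀ I ∈ 𝓘, IsBHIdeal I) : IsBHIdeal (⋂₀ 𝓘) := by
  simp only [IsBHIdeal, Set.mem_sInter] at h𝓘 ⊢
  exact ⟨fun I hI => (h𝓘 I hI).1, fun x hx y hy I hI => (h𝓘 I hI).2.1 x (hx I hI) y (hy I hI),
    fun x hx I hI => (h𝓘 I hI).2.2.1 x (hx I hI),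
    fun A x hx => ⟨fun I hI => ((h𝓘 I hI).2.2.2 A x (hx I hI)).1,
      fun I hI => ((h𝓘 I hI).2.2.2 A x (hx I hI)).2⟩⟩

theorem rankOne_mem (hJ : IsBHIdeal J) {S : E →L[ℂ] E} (hS : S ∈ J) (hS0 : S ≠ 0) (u v : E) :
    rankOne ℂ u v ∈ J := by
  obtain ⟨w, hw⟩ : ∃ w, S w ≠ 0 := by
    by_contra! h
    exact hS0 (ext h)
  have hrank : rankOne ℂ u v =
      ((inner ℂ (S w) (S w))⁻¹ • rankOne ℂ u (S w)) * (S * rankOne ℂ w v) := by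
    rw [smul_mul_assoc, mul_def, mul_def, comp_rankOne, rankOne_comp_rankOne, smul_smul,
      inv_mul_cancel₀ (inner_self_ne_zero.2 hw), one_smul]
  exact hrank ▸ hJ.mul_mem_left _ (hJ.mul_mem_right _ hS)

variable [CompleteSpace E]

theorem star_mem (hI : IsBHIdeal I) (hx : x ∈ I) : star x ∈ I := by
  obtain ⟨V, W, h⟩ := exists_star_eq_mul_mul x
  exact h ▸ hI.mul_mem_right W (hI.mul_mem_left V hx)

theorem set_mul_subset_mul_comm (hI : IsBHIdeal I) (hJ : IsBHIdeal J) : I * J ⊆ J * I := by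
  rintro _ ⟨X, hX, B, hB, rfl⟩
  obtain ⟨V, W, h⟩ := exists_star_eq_mul_mul (star B * star X)
  rw [star_mul, star_star, star_star] at h
  refine ⟨V * star B, hJ.mul_mem_left V (hJ.star_mem hB),
    star X * W, hI.mul_mem_right W (hI.star_mem hX), ?_⟩
  simp only [h, mul_assoc]

theorem set_mul_comm (hI : IsBHIdeal I) (hJ : IsBHIdeal J) : I * J = J * I :=
  (hI.set_mul_subset_mul_comm hJ).antisymm (hJ.set_mul_subset_mul_comm hI)

end IsBHIdeal

theorem IsLinearSubideal.isRealSubideal {I J : Set (E →L[ℂ] E)} (hI : IsLinearSubideal J I) :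
    IsRealSubideal J I :=
  ⟨hI.1, fun r x hx => by simpa [Complex.coe_smul] using hI.2 r x hx⟩

theorem isBHIdeal_genBH (𝒮 : Set (E →L[ℂ] E)) : IsBHIdeal (genBH 𝒮) :=
  IsBHIdeal.sInter fun _ hI => hI.1

theorem genBH_subset {𝒮 I : Set (E →L[ℂ] E)} (hI : IsBHIdeal I) (h : 𝒮 ⊆ I) : genBH 𝒮 ⊆ I :=
  Set.sInter_subset_of_mem ⟨hI, h⟩

end Ideals

section Character

variable {E : Type*} [NormedAddCommGroup E] [InnerProductSpace ℂ E]
  {N : Set (E →L[ℂ] E)} {S : E →L[ℂ] E}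

theorem exists_ringHom_of_forall_mul_sub_smul_mem (hN : IsBHIdeal N) (hSN : S ∉ N)
    (h : ∀ T, ∃ c : ℂ, T * S - c • S ∈ N) :
    ∃ φ : (E →L[ℂ] E) →+* ℂ, ∀ T, T * S - φ T • S ∈ N := by
  choose φ hφ using h
  have eq_of_mem {T : E →L[ℂ] E} {c : ℂ} (hc : T * S - c • S ∈ N) : φ T = c := by
    by_contra hne
    have := hN.sub_mem hc (hφ T)
    rw [sub_sub_sub_cancel_left, ← sub_smul, hN.smul_mem_iff (sub_ne_zero.2 hne)] at this
    exact hSN this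
  refine ⟨{ toFun := φ, map_one' := ?_, map_mul' := ?_, map_zero' := ?_, map_add' := ?_ }, hφ⟩
  · exact eq_of_mem (by simpa using hN.1)
  · intro T T'
    refine eq_of_mem ?_
    have : T * T' * S - (φ T * φ T') • S = T * (T' * S - φ T' • S) + φ T' • (T * S - φ T • S) := by
      rw [mul_sub, smul_sub, mul_smul_comm, mul_assoc, mul_comm (φ T), mul_smul]
      abel
    rw [this]
    exact hN.2.1 _ (hN.mul_mem_left T (hφ T')) _ (hN.smul_mem _ (hφ T))
  · exact eq_of_mem (by simpa using hN.1)
  · intro T T'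
    refine eq_of_mem ?_
    have : (T + T') * S - (φ T + φ T') • S = (T * S - φ T • S) + (T' * S - φ T' • S) := by
      rw [add_mul, add_smul]
      abel
    rw [this]
    exact hN.2.1 _ (hφ T) _ (hφ T')

theorem mem_of_forall_mul_sub_smul_mem [CompleteSpace E] {J : Set (E →L[ℂ] E)} (hJ : IsBHIdeal J)
    (hN : IsBHIdeal N) (hS : S ∈ J) (hJN : ∀ A ∈ J, A * S ∈ N)
    (h : ∀ T, ∃ c : ℂ, T * S - c • S ∈ N) : S ∈ N := by
  by_contra hSN
  obtain ⟨φ, hφ⟩ := exists_ringHom_of_forall_mul_sub_smul_mem hN hSN h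
  have hS0 : S ≠ 0 := by
    rintro rfl
    exact hSN hN.1
  obtain ⟨u, v, huv⟩ := φ.exists_rankOne_ne_zero
  have := hN.sub_mem (hJN _ (hJ.rankOne_mem hS hS0 u v)) (hφ (rankOne ℂ u v))
  rw [sub_sub_cancel, hN.smul_mem_iff huv] at this
  exact hSN this

end Character

theorem AddSubmonoid.mem_closure_iff_exists_fin_sum {M : Type*} [AddCommMonoid M] {s : Set M}
    {x : M} : x ∈ closure s ↔ ∃ (n : ℕ) (f : Fin n → M), (∀ i, f i ∈ s) ∧ x = ∑ i, f i := by
  constructor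
  · intro hx
    obtain ⟨l, hl, rfl⟩ := exists_list_of_mem_closure hx
    exact ⟨l.length, fun i => l[i.1], fun i => hl _ (List.getElem_mem _),
      (Fin.sum_univ_getElem l).symm⟩
  · rintro ⟨n, f, hf, rfl⟩
    exact sum_mem _ fun i _ => subset_closure (hf i)

theorem AddSubmonoid.closure_subset_of_add_mem {M : Type*} [AddMonoid M] {s t : Set M}
    (h0 : (0 : M) ∈ t) (hadd : ∀ x ∈ t, ∀ y ∈ t, x + y ∈ t) (hst : s ⊆ t) :
    (closure s : Set M) ⊆ t :=
  closure_le (S := { carrier := t, add_mem' := fun hx hy => hadd _ hx _ hy, zero_mem' := h0 }).2 hst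

section Generated

open Pointwise

variable {E : Type*} [NormedAddCommGroup E] [InnerProductSpace ℂ E]
  {J : Set (E →L[ℂ] E)} {S : E →L[ℂ] E}

theorem isBHIdeal_closure {G : Set (E →L[ℂ] E)} (hneg : ∀ x ∈ G, -x ∈ G)
    (hmul : ∀ T, ∀ x ∈ G, T * x ∈ G ∧ x * T ∈ G) :
    IsBHIdeal (AddSubmonoid.closure G : Set (E →L[ℂ] E)) := by
  refine ⟨zero_mem _, fun x hx y hy => add_mem hx hy, fun x hx => ?_, fun T x hx => ⟨?_, ?_⟩⟩
  · induction hx using AddSubmonoid.closure_induction with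
    | mem x hx => exact AddSubmonoid.subset_closure (hneg x hx)
    | zero => simp
    | add x y _ _ hx hy => rw [neg_add]; exact add_mem hx hy
  · induction hx using AddSubmonoid.closure_induction with
    | mem x hx => exact AddSubmonoid.subset_closure (hmul T x hx).1
    | zero => simp
    | add x y _ _ hx hy => rw [mul_add]; exact add_mem hx hy
  · induction hx using AddSubmonoid.closure_induction with
    | mem x hx => exact AddSubmonoid.subset_closure (hmul T x hx).2
    | zero => simp
    | add x y _ _ hx hy => rw [add_mul]; exact add_mem hx hy

theorem subset_genBH (𝒮 : Set (E →L[ℂ] E)) : 𝒮 ⊆ genBH 𝒮 :=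
  Set.subset_sInter fun _ hI => hI.2

theorem JGen_eq_closure (J 𝒮 : Set (E →L[ℂ] E)) :
    JGen J 𝒮 = AddSubmonoid.closure (J * genBH 𝒮) := by
  ext x
  rw [SetLike.mem_coe, AddSubmonoid.mem_closure_iff_exists_fin_sum]
  constructor
  · rintro ⟨n, A, X, hAX, rfl⟩
    exact ⟨n, fun i => A i * X i, fun i => Set.mul_mem_mul (hAX i).1 (hAX i).2, rfl⟩
  · rintro ⟨n, f, hf, rfl⟩
    choose A hA X hX hAX using hf
    exact ⟨n, A, X, fun i => ⟨hA i, hX i⟩, by simp only [hAX]⟩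

theorem isBHIdeal_JGen (hJ : IsBHIdeal J) (𝒮 : Set (E →L[ℂ] E)) : IsBHIdeal (JGen J 𝒮) := by
  rw [JGen_eq_closure]
  refine isBHIdeal_closure (G := J * genBH 𝒮) ?_ ?_
  · rintro _ ⟨A, hA, X, hX, rfl⟩
    exact ⟨-A, hJ.2.2.1 A hA, X, hX, neg_mul A X⟩
  · rintro T _ ⟨A, hA, X, hX, rfl⟩
    exact ⟨⟨T * A, hJ.mul_mem_left T hA, X, hX, (mul_assoc T A X).symm⟩,
      ⟨A, hA, X * T, (isBHIdeal_genBH 𝒮).mul_mem_right T hX, mul_assoc A X T⟩⟩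

theorem mul_singleton_mem_JGen {A : E →L[ℂ] E} (hA : A ∈ J) : A * S ∈ JGen J {S} := by
  rw [JGen_eq_closure]
  exact AddSubmonoid.subset_closure (Set.mul_mem_mul hA (subset_genBH _ rfl))

theorem genBH_eq_JGen_iff (hJ : IsBHIdeal J) : genBH {S} = JGen J {S} ↔ S ∈ JGen J {S} := by
  refine ⟨fun h => h ▸ subset_genBH _ rfl, fun h => ?_⟩
  refine (genBH_subset (isBHIdeal_JGen hJ _) (Set.singleton_subset_iff.2 h)).antisymm ?_
  have hE := isBHIdeal_genBH {S}
  rw [JGen_eq_closure]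
  refine AddSubmonoid.closure_subset_of_add_mem hE.1 hE.2.1 ?_
  rintro _ ⟨A, -, X, hX, rfl⟩
  exact hE.mul_mem_left A hX

theorem mem_mul_singleton_mul {x : E →L[ℂ] E} :
    x ∈ J * {S} * J ↔ ∃ A ∈ J, ∃ B ∈ J, A * S * B = x := by
  simp [Set.mem_mul]

theorem isBHIdeal_closure_mul_singleton_mul (hJ : IsBHIdeal J) :
    IsBHIdeal (AddSubmonoid.closure (J * {S} * J) : Set (E →L[ℂ] E)) := by
  refine isBHIdeal_closure (fun x hx => ?_) (fun T x hx => ?_) <;>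
    obtain ⟨A, hA, B, hB, rfl⟩ := mem_mul_singleton_mul.1 hx <;> simp only [mem_mul_singleton_mul]
  · exact ⟨-A, hJ.2.2.1 A hA, B, hB, by noncomm_ring⟩
  · exact ⟨⟨T * A, hJ.mul_mem_left T hA, B, hB, by noncomm_ring⟩,
      ⟨A, hA, B * T, hJ.mul_mem_right T hB, by noncomm_ring⟩⟩

theorem closure_mul_singleton_mul_subset {I : Set (E →L[ℂ] E)} (hI : IsSubideal J I)
    (hS : S ∈ I) : (AddSubmonoid.closure (J * {S} * J) : Set (E →L[ℂ] E)) ⊆ I := by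
  refine AddSubmonoid.closure_subset_of_add_mem hI.2.1 hI.2.2.1 fun x hx => ?_
  obtain ⟨A, hA, B, hB, rfl⟩ := mem_mul_singleton_mul.1 hx
  exact (hI.2.2.2.2 B hB _ (hI.2.2.2.2 A hA S hS).1).2

/-- The operators `X` with `J X J ⊆ JSJ` form a `B(E)`-ideal containing `S`. -/
theorem mul_mul_mem_closure_of_mem_genBH (hJ : IsBHIdeal J) {A X B : E →L[ℂ] E}
    (hA : A ∈ J) (hX : X ∈ genBH {S}) (hB : B ∈ J) :
    A * X * B ∈ AddSubmonoid.closure (J * {S} * J) := by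
  have hF := isBHIdeal_closure_mul_singleton_mul (S := S) hJ
  have hI : IsBHIdeal {X | ∀ A ∈ J, ∀ B ∈ J, A * X * B ∈ AddSubmonoid.closure (J * {S} * J)} := by
    refine ⟨fun A _ B _ => by simp, fun X hX Y hY A hA B hB => ?_,
      fun X hX A hA B hB => by simpa using hF.2.2.1 _ (hX A hA B hB),
      fun T X hX => ⟨fun A hA B hB => ?_, fun A hA B hB => ?_⟩⟩
    · simpa [mul_add, add_mul] using hF.2.1 _ (hX A hA B hB) _ (hY A hA B hB)
    · simpa [mul_assoc] using hX (A * T) (hJ.mul_mem_right T hA) B hB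
    · simpa [mul_assoc] using hX A hA (T * B) (hJ.mul_mem_left T hB)
  refine genBH_subset hI (Set.singleton_subset_iff.2 fun A hA B hB => ?_) hX A hA B hB
  exact AddSubmonoid.subset_closure (mem_mul_singleton_mul.2 ⟨A, hA, B, hB, rfl⟩)

end Generated

section Soft

open Pointwise

variable {E : Type*} [NormedAddCommGroup E] [InnerProductSpace ℂ E] [CompleteSpace E]
  {J : Set (E →L[ℂ] E)} {S : E →L[ℂ] E}

theorem singleton_mul_mem_JGen (hJ : IsBHIdeal J) {B : E →L[ℂ] E} (hB : B ∈ J) :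
    S * B ∈ JGen J {S} := by
  rw [JGen_eq_closure, ← (isBHIdeal_genBH {S}).set_mul_comm hJ]
  exact AddSubmonoid.subset_closure (Set.mul_mem_mul (subset_genBH _ rfl) hB)

/-- As `J * (S) = (S) * J`, `S` is a sum of terms `X B` with `X ∈ (S) ⊆ J(S)` and `B ∈ J`. -/
theorem mem_closure_mul_singleton_mul_of_mem_JGen (hJ : IsBHIdeal J) (h : S ∈ JGen J {S}) :
    S ∈ AddSubmonoid.closure (J * {S} * J) := by
  have hF := isBHIdeal_closure_mul_singleton_mul (S := S) hJ
  have hE : genBH {S} ⊆ JGen J {S} :=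
    genBH_subset (isBHIdeal_JGen hJ _) (Set.singleton_subset_iff.2 h)
  rw [JGen_eq_closure, hJ.set_mul_comm (isBHIdeal_genBH _)] at h
  refine AddSubmonoid.closure_subset_of_add_mem hF.1 hF.2.1 ?_ h
  rintro _ ⟨X, hX, B, hB, rfl⟩
  replace hX := hE hX
  rw [JGen_eq_closure] at hX
  induction hX using AddSubmonoid.closure_induction with
  | mem x hx =>
    obtain ⟨A, hA, Y, hY, rfl⟩ := hx
    exact mul_mul_mem_closure_of_mem_genBH hJ hA hY hB
  | zero => simp
  | add x y _ _ hx hy => simpa only [add_mul] using hF.2.1 _ hx _ hy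

theorem exists_eq_add_add_sum_iff (hJ : IsBHIdeal J) :
    (∃ (m : ℕ), ∃ A ∈ J, ∃ B ∈ J, ∃ (C D : Fin m → (E →L[ℂ] E)),
      (∀ i, C i ∈ J ∧ D i ∈ J) ∧ S = A * S + S * B + ∑ i, C i * S * D i) ↔
    S ∈ JGen J {S} := by
  constructor
  · rintro ⟨m, A, hA, B, hB, C, D, hCD, hS⟩
    have hAS := mul_singleton_mem_JGen (S := S) hA
    have hSB := singleton_mul_mem_JGen (S := S) hJ hB
    rw [JGen_eq_closure] at hAS hSB ⊢
    have : A * S + S * B + ∑ i, C i * S * D i ∈ AddSubmonoid.closure (J * genBH {S}) := by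
      refine add_mem (add_mem hAS hSB) (sum_mem fun i _ => ?_)
      rw [mul_assoc]
      exact AddSubmonoid.subset_closure (Set.mul_mem_mul (hCD i).1
        ((isBHIdeal_genBH _).mul_mem_right _ (subset_genBH _ rfl)))
    rwa [← hS] at this
  · intro h
    obtain ⟨n, f, hf, hS⟩ := AddSubmonoid.mem_closure_iff_exists_fin_sum.1
      (mem_closure_mul_singleton_mul_of_mem_JGen hJ h)
    choose C hC D hD hCD using fun i => mem_mul_singleton_mul.1 (hf i)
    refine ⟨n, 0, hJ.1, 0, hJ.1, C, D, fun i => ⟨hC i, hD i⟩, ?_⟩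
    simpa only [hCD, zero_mul, mul_zero, zero_add] using hS

theorem isLinearSubideal_smul_add_JGen (hJ : IsBHIdeal J) (hS : S ∈ J) :
    IsLinearSubideal J {x | ∃ c : ℂ, x - c • S ∈ JGen J {S}} := by
  have hN := isBHIdeal_JGen hJ {S}
  have hNJ : JGen J {S} ⊆ J := by
    rw [JGen_eq_closure]
    refine AddSubmonoid.closure_subset_of_add_mem hJ.1 hJ.2.1 ?_
    rintro _ ⟨A, hA, X, -, rfl⟩
    exact hJ.mul_mem_right X hA
  refine ⟨⟨?_, ⟨0, by simpa using hN.1⟩, ?_, ?_, ?_⟩, ?_⟩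
  · rintro x ⟨c, hc⟩
    simpa using hJ.2.1 _ (hNJ hc) _ (hJ.smul_mem c hS)
  · rintro x ⟨c, hc⟩ y ⟨c', hc'⟩
    exact ⟨c + c', by convert hN.2.1 _ hc _ hc' using 1; module⟩
  · rintro x ⟨c, hc⟩
    exact ⟨-c, by convert hN.2.2.1 _ hc using 1; module⟩
  · rintro A hA x ⟨c, hc⟩
    refine ⟨⟨0, ?_⟩, ⟨0, ?_⟩⟩
    · convert hN.2.1 _ (hN.mul_mem_left A hc) _ (hN.smul_mem c (mul_singleton_mem_JGen hA)) using 1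
      rw [mul_sub, mul_smul_comm]; module
    · convert hN.2.1 _ (hN.mul_mem_right A hc) _ (hN.smul_mem c (singleton_mul_mem_JGen hJ hA))
        using 1
      rw [sub_mul, smul_mul_assoc]; module
  · rintro c' x ⟨c, hc⟩
    exact ⟨c' * c, by convert hN.smul_mem c' hc using 1; module⟩

theorem isBHIdeal_sInter_iff {P : Set (E →L[ℂ] E) → Prop} (hP : ∀ I, P I → IsSubideal J I)
    (hlin : ∀ I, IsLinearSubideal J I → P I) (hJ : IsBHIdeal J) (hS : S ∈ J) :
    IsBHIdeal (⋂₀ {I | P I ∧ {S} ⊆ I}) ↔ S ∈ JGen J {S} := by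
  constructor
  · intro hgen
    have hSgen : S ∈ ⋂₀ {I | P I ∧ {S} ⊆ I} := Set.mem_sInter.2 fun _ hI => hI.2 rfl
    have hsub : ⋂₀ {I | P I ∧ {S} ⊆ I} ⊆ {x | ∃ c : ℂ, x - c • S ∈ JGen J {S}} :=
      Set.sInter_subset_of_mem ⟨hlin _ (isLinearSubideal_smul_add_JGen hJ hS),
        Set.singleton_subset_iff.2 (show S ∈ {x | ∃ c : ℂ, x - c • S ∈ JGen J {S}} from
          ⟨1, by simpa using (isBHIdeal_JGen hJ _).1⟩)⟩
    exact mem_of_forall_mul_sub_smul_mem hJ (isBHIdeal_JGen hJ _) hS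
      (fun _ => mul_singleton_mem_JGen) fun T => hsub (hgen.mul_mem_left T hSgen)
  · intro h
    have hF := isBHIdeal_closure_mul_singleton_mul (S := S) hJ
    have hFJ := closure_mul_singleton_mul_subset (hJ.isSubideal subset_rfl) hS
    have hmem : (AddSubmonoid.closure (J * {S} * J) : Set (E →L[ℂ] E)) ∈ {I | P I ∧ {S} ⊆ I} :=
      ⟨hlin _ (hF.isLinearSubideal hFJ),
        Set.singleton_subset_iff.2 (mem_closure_mul_singleton_mul_of_mem_JGen hJ h)⟩
    suffices ⋂₀ {I | P I ∧ {S} ⊆ I} = AddSubmonoid.closure (J * {S} * J) from this ▸ hF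
    exact (Set.sInter_subset_of_mem hmem).antisymm
      (Set.subset_sInter fun I hI => closure_mul_singleton_mul_subset (hP I hI.1) (hI.2 rfl))

end Soft

/-- equivalent conditions for a principal `J`-ideal to be a `B(H)`-ideal. -/
theorem stmt_3 (J : Set (H →L[ℂ] H)) (hJ : IsBHIdeal J)
    (S : H →L[ℂ] H) (hS : S ∈ J) :
    (IsBHIdeal (genLin J {S}) ↔ IsBHIdeal (genSub J {S})) ∧
    (IsBHIdeal (genLin J {S}) ↔ IsBHIdeal (genReal J {S})) ∧
    (IsBHIdeal (genLin J {S}) ↔ genBH {S} = JGen J {S}) ∧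
    (IsBHIdeal (genLin J {S}) ↔
      ∃ (m : ℕ), ∃ A ∈ J, ∃ B ∈ J, ∃ (C D : Fin m → (H →L[ℂ] H)),
        (∀ i, C i ∈ J ∧ D i ∈ J) ∧ S = A * S + S * B + ∑ i, C i * S * D i) := by
  have hlin : IsBHIdeal (genLin J {S}) ↔ S ∈ JGen J {S} :=
    isBHIdeal_sInter_iff (fun _ hI => hI.1) (fun _ hI => hI) hJ hS
  have hsub : IsBHIdeal (genSub J {S}) ↔ S ∈ JGen J {S} :=
    isBHIdeal_sInter_iff (fun _ hI => hI) (fun _ hI => hI.1) hJ hS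
  have hreal : IsBHIdeal (genReal J {S}) ↔ S ∈ JGen J {S} :=
    isBHIdeal_sInter_iff (fun _ hI => hI.1) (fun _ hI => hI.isRealSubideal) hJ hS
  rw [hlin, hsub, hreal, genBH_eq_JGen_iff hJ, exists_eq_add_add_sum_iff hJ]
  exact ⟨.rfl, .rfl, .rfl, .rfl⟩
end

section
/- Let J be a B(H)-ideal and S ∈ J. Then every linear J-ideal I with JS + SJ + J(S)J ⊆ I ⊆ (S)_J satisfies I = JS + SJ + J(S)J or I = (S)_J; likewise every real linear J-ideal I with JS + SJ + J(S)J ⊆ I ⊆ (S)_J^ℝ satisfies I = JS + SJ + J(S)J or I = (S)_J^ℝ. That is, JS + SJ + J(S)J is a maximal linear J-ideal in (S)_J and a maximal real linear J-ideal in (S)_J^ℝ. -/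
open scoped BigOperators
open TopologicalSpace

variable {H : Type*} [NormedAddCommGroup H] [InnerProductSpace ℂ H] [CompleteSpace H]

set_option linter.unusedSectionVars false

/-! The `𝕜`-linear `J`-ideal generated by `S ∈ J` is `𝕜 S + (JS + SJ + J(S)J)`: this set is closed
under multiplication by `J` on either side, because `A (c S + T) = (c A) S + A T` and
`A T ∈ JS + SJ + J(S)J` for `A ∈ J`. So `JS + SJ + J(S)J` has codimension at most one in it, and a
`𝕜`-linear `J`-ideal `I` in between either contains no `c S + T` with `c ≠ 0`, and then equals
`JS + SJ + J(S)J`, or contains one, hence `S = c⁻¹ ((c S + T) - T)`, and then is everything. -/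

variable {𝕜 : Type*} [Field 𝕜] [Algebra 𝕜 (H →L[ℂ] H)]

-- `IsLinearSubideal` and `IsRealSubideal` are the cases `𝕜 = ℂ` and `𝕜 = ℝ`.
variable (𝕜) in
def IsLinearSubidealOver (J I : Set (H →L[ℂ] H)) : Prop :=
  IsSubideal J I ∧ ∀ (c : 𝕜), ∀ x ∈ I, c • x ∈ I

variable (𝕜) in
def genLinOver (J 𝒮 : Set (H →L[ℂ] H)) : Set (H →L[ℂ] H) :=
  ⋂₀ {I | IsLinearSubidealOver 𝕜 J I ∧ 𝒮 ⊆ I}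

section
variable {J 𝒮 : Set (H →L[ℂ] H)} {S A B X Y : H →L[ℂ] H}

theorem IsBHIdeal.sum_mem (hJ : IsBHIdeal J) {ι : Type*} (s : Finset ι)
    {f : ι → H →L[ℂ] H} (hf : ∀ i ∈ s, f i ∈ J) : ∑ i ∈ s, f i ∈ J :=
  Finset.sum_induction f (· ∈ J) (fun a b ha hb => hJ.2.1 a ha b hb) hJ.1 hf

theorem IsBHIdeal.smul_mem_s14 (hJ : IsBHIdeal J) (c : 𝕜) (hX : X ∈ J) : c • X ∈ J := by
  simpa only [smul_one_mul] using (hJ.2.2.2 (c • 1) X hX).1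

theorem IsSubideal.sub_mem {I : Set (H →L[ℂ] H)} (hI : IsSubideal J I)
    (hX : X ∈ I) (hY : Y ∈ I) : X - Y ∈ I := by
  simpa only [sub_eq_add_neg] using hI.2.2.1 X hX (-Y) (hI.2.2.2.1 Y hY)

theorem subset_genBH_s14 : 𝒮 ⊆ genBH 𝒮 := fun _ hX _ hI => hI.2 hX

theorem zero_mem_JGenJ : (0 : H →L[ℂ] H) ∈ JGenJ J 𝒮 :=
  ⟨0, ![], ![], ![], fun i => i.elim0, by simp⟩

theorem mul_mul_mem_JGenJ (hA : A ∈ J) (hX : X ∈ genBH 𝒮) (hB : B ∈ J) :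
    A * X * B ∈ JGenJ J 𝒮 :=
  ⟨1, ![A], ![X], ![B], Fin.forall_fin_one.2 ⟨hA, hX, hB⟩, by simp⟩

theorem add_mem_JGenJ (hX : X ∈ JGenJ J 𝒮) (hY : Y ∈ JGenJ J 𝒮) : X + Y ∈ JGenJ J 𝒮 := by
  obtain ⟨n, A, X, B, h, rfl⟩ := hX
  obtain ⟨m, A', X', B', h', rfl⟩ := hY
  refine ⟨n + m, Fin.append A A', Fin.append X X', Fin.append B B', fun k => ?_, ?_⟩
  · refine Fin.addCases (fun i => ?_) (fun i => ?_) k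
    · simpa only [Fin.append_left] using h i
    · simpa only [Fin.append_right] using h' i
  · simp [Fin.sum_univ_add]

theorem mul_mem_JGenJ_left (hJ : IsBHIdeal J) (C : H →L[ℂ] H) (hY : Y ∈ JGenJ J 𝒮) :
    C * Y ∈ JGenJ J 𝒮 := by
  obtain ⟨n, A, X, B, h, rfl⟩ := hY
  exact ⟨n, fun i => C * A i, X, B, fun i => ⟨(hJ.2.2.2 C _ (h i).1).1, (h i).2⟩,
    by simp only [Finset.mul_sum, mul_assoc]⟩

theorem mul_mem_JGenJ_right (hJ : IsBHIdeal J) (C : H →L[ℂ] H) (hY : Y ∈ JGenJ J 𝒮) :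
    Y * C ∈ JGenJ J 𝒮 := by
  obtain ⟨n, A, X, B, h, rfl⟩ := hY
  exact ⟨n, A, X, fun i => B i * C, fun i => ⟨(h i).1, (h i).2.1, (hJ.2.2.2 C _ (h i).2.2).2⟩,
    by simp only [Finset.sum_mul, mul_assoc]⟩

theorem smul_mem_JGenJ (hJ : IsBHIdeal J) (c : 𝕜) (hY : Y ∈ JGenJ J 𝒮) :
    c • Y ∈ JGenJ J 𝒮 := by
  simpa only [smul_one_mul] using mul_mem_JGenJ_left hJ (c • 1) hY

theorem JGenJ_subset (hJ : IsBHIdeal J) : JGenJ J 𝒮 ⊆ J := by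
  rintro _ ⟨n, A, X, B, h, rfl⟩
  exact hJ.sum_mem _ fun i _ => (hJ.2.2.2 (B i) _ (hJ.2.2.2 (X i) (A i) (h i).1).2).2

theorem zero_mem_JSplus (hJ : IsBHIdeal J) : (0 : H →L[ℂ] H) ∈ JSplus J S :=
  ⟨0, hJ.1, 0, hJ.1, 0, zero_mem_JGenJ, by simp⟩

theorem mul_generator_mem_JSplus (hJ : IsBHIdeal J) (hA : A ∈ J) : A * S ∈ JSplus J S :=
  ⟨A, hA, 0, hJ.1, 0, zero_mem_JGenJ, by simp⟩

theorem generator_mul_mem_JSplus (hJ : IsBHIdeal J) (hB : B ∈ J) : S * B ∈ JSplus J S :=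
  ⟨0, hJ.1, B, hB, 0, zero_mem_JGenJ, by simp⟩

theorem add_mem_JSplus (hJ : IsBHIdeal J) (hX : X ∈ JSplus J S) (hY : Y ∈ JSplus J S) :
    X + Y ∈ JSplus J S := by
  obtain ⟨A, hA, B, hB, Z, hZ, rfl⟩ := hX
  obtain ⟨A', hA', B', hB', Z', hZ', rfl⟩ := hY
  exact ⟨A + A', hJ.2.1 _ hA _ hA', B + B', hJ.2.1 _ hB _ hB', Z + Z',
    add_mem_JGenJ hZ hZ', by noncomm_ring⟩

theorem smul_mem_JSplus (hJ : IsBHIdeal J) (c : 𝕜) (hX : X ∈ JSplus J S) :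
    c • X ∈ JSplus J S := by
  obtain ⟨A, hA, B, hB, Z, hZ, rfl⟩ := hX
  exact ⟨c • A, hJ.smul_mem_s14 c hA, c • B, hJ.smul_mem_s14 c hB, c • Z, smul_mem_JGenJ hJ c hZ,
    by simp only [smul_add, smul_mul_assoc, mul_smul_comm]⟩

theorem mul_mem_JSplus_left (hJ : IsBHIdeal J) (hA : A ∈ J) (hX : X ∈ JSplus J S) :
    A * X ∈ JSplus J S := by
  obtain ⟨A', hA', B, hB, Z, hZ, rfl⟩ := hX
  refine ⟨A * A', (hJ.2.2.2 A A' hA').1, 0, hJ.1, A * S * B + A * Z,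
    add_mem_JGenJ (mul_mul_mem_JGenJ hA (subset_genBH_s14 rfl) hB)
      (mul_mem_JGenJ_left hJ A hZ), ?_⟩
  noncomm_ring

theorem mul_mem_JSplus_right (hJ : IsBHIdeal J) (hB : B ∈ J) (hX : X ∈ JSplus J S) :
    X * B ∈ JSplus J S := by
  obtain ⟨A, hA, B', hB', Z, hZ, rfl⟩ := hX
  refine ⟨0, hJ.1, B' * B, (hJ.2.2.2 B B' hB').2, A * S * B + Z * B,
    add_mem_JGenJ (mul_mul_mem_JGenJ hA (subset_genBH_s14 rfl) hB)
      (mul_mem_JGenJ_right hJ B hZ), ?_⟩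
  noncomm_ring

theorem JSplus_subset (hJ : IsBHIdeal J) (hS : S ∈ J) : JSplus J S ⊆ J := by
  rintro _ ⟨A, hA, B, hB, Y, hY, rfl⟩
  exact hJ.2.1 _ (hJ.2.1 _ (hJ.2.2.2 S A hA).2 _ (hJ.2.2.2 B S hS).2) _ (JGenJ_subset hJ hY)

variable (𝕜) in
theorem isLinearSubidealOver_smul_add_JSplus (hJ : IsBHIdeal J) (hS : S ∈ J) :
    IsLinearSubidealOver 𝕜 J {X | ∃ c : 𝕜, ∃ T ∈ JSplus J S, X = c • S + T} := by
  refine ⟨⟨?_, ⟨0, 0, zero_mem_JSplus hJ, by simp⟩, ?_, ?_, ?_⟩, ?_⟩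
  · rintro _ ⟨c, T, hT, rfl⟩
    exact hJ.2.1 _ (hJ.smul_mem_s14 c hS) _ (JSplus_subset hJ hS hT)
  · rintro _ ⟨c, T, hT, rfl⟩ _ ⟨c', T', hT', rfl⟩
    exact ⟨c + c', T + T', add_mem_JSplus hJ hT hT', by module⟩
  · rintro _ ⟨c, T, hT, rfl⟩
    exact ⟨-c, (-1 : 𝕜) • T, smul_mem_JSplus hJ (-1) hT, by module⟩
  · rintro A hA _ ⟨c, T, hT, rfl⟩
    refine ⟨⟨0, (c • A) * S + A * T, add_mem_JSplus hJ
      (mul_generator_mem_JSplus hJ (hJ.smul_mem_s14 c hA)) (mul_mem_JSplus_left hJ hA hT), ?_⟩,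
      ⟨0, S * (c • A) + T * A, add_mem_JSplus hJ
      (generator_mul_mem_JSplus hJ (hJ.smul_mem_s14 c hA)) (mul_mem_JSplus_right hJ hA hT), ?_⟩⟩
    · simp only [mul_add, mul_smul_comm, smul_mul_assoc, zero_smul, zero_add]
    · simp only [add_mul, mul_smul_comm, smul_mul_assoc, zero_smul, zero_add]
  · rintro c _ ⟨c', T, hT, rfl⟩
    exact ⟨c * c', c • T, smul_mem_JSplus hJ c hT, by module⟩

theorem genLinOver_subset_smul_add_JSplus (hJ : IsBHIdeal J) (hS : S ∈ J) :
    genLinOver 𝕜 J {S} ⊆ {X | ∃ c : 𝕜, ∃ T ∈ JSplus J S, X = c • S + T} :=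
  Set.sInter_subset_of_mem ⟨isLinearSubidealOver_smul_add_JSplus 𝕜 hJ hS,
    Set.singleton_subset_iff.2 ⟨1, 0, zero_mem_JSplus hJ, by simp⟩⟩

theorem JSplus_eq_or_genLinOver_eq (hJ : IsBHIdeal J) (hS : S ∈ J) {I : Set (H →L[ℂ] H)}
    (hI : IsLinearSubidealOver 𝕜 J I) (hlo : JSplus J S ⊆ I)
    (hhi : I ⊆ genLinOver 𝕜 J {S}) : I = JSplus J S ∨ I = genLinOver 𝕜 J {S} := by
  by_cases hSI : S ∈ I
  · exact .inr (hhi.antisymm (Set.sInter_subset_of_mem ⟨hI, Set.singleton_subset_iff.2 hSI⟩))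
  refine .inl (Set.Subset.antisymm (fun X hX => ?_) hlo)
  obtain ⟨c, T, hT, rfl⟩ := genLinOver_subset_smul_add_JSplus hJ hS (hhi hX)
  obtain rfl | hc := eq_or_ne c 0
  · simpa using hT
  refine absurd ?_ hSI
  have h : c⁻¹ • (c • S + T - T) = S := by rw [add_sub_cancel_right, inv_smul_smul₀ hc]
  exact h ▸ hI.2 c⁻¹ _ (hI.1.sub_mem hX (hlo hT))

end

/-- `JS + SJ + J(S)J` is a maximal linear `J`-ideal in `(S)_J` and a
maximal real linear `J`-ideal in `(S)_J^ℝ`. -/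
theorem stmt_14 (J : Set (H →L[ℂ] H)) (hJ : IsBHIdeal J)
    (S : H →L[ℂ] H) (hS : S ∈ J) :
    (∀ I, IsLinearSubideal J I → JSplus J S ⊆ I → I ⊆ genLin J {S} →
      I = JSplus J S ∨ I = genLin J {S}) ∧
    (∀ I, IsRealSubideal J I → JSplus J S ⊆ I → I ⊆ genReal J {S} →
      I = JSplus J S ∨ I = genReal J {S}) :=
  ⟨fun _ => JSplus_eq_or_genLinOver_eq (𝕜 := ℂ) hJ hS,
    fun _ => JSplus_eq_or_genLinOver_eq (𝕜 := ℝ) hJ hS⟩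
end
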